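/- arXiv:math/0703154 — 2 statements merged into one kernel-verified Lean document; each statement's English description precedes it below -/
import Mathlib

section
/- Let M be an invertible m×m matrix whose columns are the evaluation vectors t_1(P̄),…,t_m(P̄), and let σ_min be its smallest singular value. Let ḡ = t̄ - Σ_{j=1}^k c̄_j t̄_j be a polynomial (k ≤ m) with evaluation vector ḡ(P̄) ∈ ℝ^m, and define c_E = M⁻¹·t̄(P̄) and g_E = t̄ - Σ_{j=1}^m (c_E)_j t̄_j. Then g_E vanishes at all points of P̄, and each coefficient of g_E differs from the corresponding coefficient of ḡ (extending c̄ by zeros) by at most ‖ḡ(P̄)‖_2 / σ_min. -/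
/-- Evaluation of the monomial with exponent vector `j` at the point `p`. -/
def monoEval {s : ℕ} (j : Fin s → ℕ) (p : Fin s → ℝ) : ℝ := ∏ i, p i ^ j i

/-- Euclidean 2-norm of a vector in `ℝ^m`. -/
noncomputable def norm2 {m : ℕ} (v : Fin m → ℝ) : ℝ := Real.sqrt (∑ i, v i ^ 2)

lemma abs_le_norm2 {m : ℕ} (v : Fin m → ℝ) (j : Fin m) : |v j| ≤ norm2 v := by
  have h : |v j| = Real.sqrt ((v j) ^ 2) := by
    rw [Real.sqrt_sq_eq_abs]
  rw [h, norm2]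
  apply Real.sqrt_le_sqrt
  exact Finset.single_le_sum (fun i _ => sq_nonneg (v i)) (Finset.mem_univ j)

theorem pseudozero_theorem {s m k : ℕ} (hk : k ≤ m)
    (τ : Fin m → Fin s → ℕ) (tbar : Fin s → ℕ) (Pbar : Fin m → Fin s → ℝ)
    (M : Matrix (Fin m) (Fin m) ℝ) (hMdef : M = Matrix.of fun i j => monoEval (τ j) (Pbar i))
    (hM : IsUnit M) (σmin : ℝ) (hσ : 0 < σmin)
    (hlow : ∀ y : Fin m → ℝ, σmin * norm2 y ≤ norm2 (M.mulVec y))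
    (cbar : Fin k → ℝ)
    -- `cbar` extended by zeros to all `m` coefficients
    (cbar' : Fin m → ℝ)
    (hcbar' : ∀ j : Fin m, cbar' j = if h : (j : ℕ) < k then cbar ⟨j, h⟩ else 0)
    -- the evaluation vector of `ḡ = t̄ - ∑ c̄_j t̄_j` at the points `P̄`
    (G : Fin m → ℝ)
    (hG : ∀ i, G i = monoEval tbar (Pbar i) - ∑ j, cbar' j * monoEval (τ j) (Pbar i))
    (cE : Fin m → ℝ) (hcE : cE = M⁻¹.mulVec (fun i => monoEval tbar (Pbar i))) :
    (∀ i, monoEval tbar (Pbar i) - ∑ j, cE j * monoEval (τ j) (Pbar i) = 0) ∧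
      ∀ j, |cE j - cbar' j| ≤ norm2 G / σmin := by
  have hdet : IsUnit M.det := (Matrix.isUnit_iff_isUnit_det M).mp hM
  have hMcE : M.mulVec cE = fun i => monoEval tbar (Pbar i) := by
    rw [hcE, Matrix.mulVec_mulVec, Matrix.mul_nonsing_inv M hdet, Matrix.one_mulVec]
  have hentry : ∀ i j, M i j = monoEval (τ j) (Pbar i) := by
    intro i j; rw [hMdef]; rfl
  have hvanish : ∀ i, monoEval tbar (Pbar i) - ∑ j, cE j * monoEval (τ j) (Pbar i) = 0 := by
    intro i
    have := congrFun hMcE i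
    rw [Matrix.mulVec, dotProduct] at this
    simp only [hentry] at this
    rw [← this]
    rw [Finset.sum_congr rfl (fun j _ => mul_comm (cE j) (monoEval (τ j) (Pbar i)))]
    ring
  refine ⟨hvanish, ?_⟩
  set d : Fin m → ℝ := fun j => cE j - cbar' j with hd
  have hMd : M.mulVec d = G := by
    funext i
    have h1 : M.mulVec d i = M.mulVec cE i - M.mulVec cbar' i := by
      simp [Matrix.mulVec, dotProduct, hd, mul_sub, Finset.sum_sub_distrib]
    rw [h1, congrFun hMcE i, hG i]
    congr 1
    rw [Matrix.mulVec, dotProduct]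
    exact Finset.sum_congr rfl (fun j _ => by rw [hentry, mul_comm])
  have hle : norm2 d ≤ norm2 G / σmin := by
    rw [le_div_iff₀ hσ, mul_comm]
    rw [← hMd]
    exact hlow d
  intro j
  exact le_trans (abs_le_norm2 d j) hle
end

section
/- Let t_1,…,t_k be monomials of degrees at most d_M, and let P, P̄ be m-tuples of points in ℝ^s with coordinatewise relative perturbations bounded by δ_R, with d_M·δ_R ≤ 1. Let M(P) and M(P̄) be the m×k matrices with columns t_j(P) and t_j(P̄) respectively. Then ‖M(P̄) - M(P)‖_2 ≤ √k · e · d_M · δ_R · ‖M(P)‖_2, where ‖·‖_2 denotes the spectral norm and e = exp(1). -/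
/-- Spectral (operator 2-) norm of an `m × k` real matrix. -/
noncomputable def specNorm {m k : ℕ} (A : Matrix (Fin m) (Fin k) ℝ) : ℝ :=
  ‖LinearMap.toContinuousLinearMap (Matrix.toEuclideanLin A)‖

/-- Frobenius norm (explicit). -/
noncomputable def frob {m k : ℕ} (A : Matrix (Fin m) (Fin k) ℝ) : ℝ :=
  Real.sqrt (∑ i, ∑ j, A i j ^ 2)

lemma frob_nonneg {m k : ℕ} (A : Matrix (Fin m) (Fin k) ℝ) : 0 ≤ frob A := Real.sqrt_nonneg _

lemma abs_mul_sub_one' {a b A B : ℝ} (hA : 1 ≤ A) (_hB : 1 ≤ B)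
    (ha : |a - 1| ≤ A - 1) (hb : |b - 1| ≤ B - 1) : |a * b - 1| ≤ A * B - 1 := by
  have h1 : |a| ≤ A := by
    have := abs_sub_abs_le_abs_sub a 1; simp at this; linarith
  calc |a * b - 1| = |a * (b - 1) + (a - 1)| := by ring_nf
    _ ≤ |a * (b - 1)| + |a - 1| := abs_add_le _ _
    _ = |a| * |b - 1| + |a - 1| := by rw [abs_mul]
    _ ≤ A * (B - 1) + (A - 1) := by
        have := abs_nonneg (b - 1)
        gcongr
    _ = A * B - 1 := by ring

lemma abs_pow_sub_one' {x ε : ℝ} (hε : 0 ≤ ε) (hx : |x - 1| ≤ ε) (n : ℕ) :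
    |x ^ n - 1| ≤ (1 + ε) ^ n - 1 := by
  induction n with
  | zero => simp
  | succ n ih =>
      have h1 : (1:ℝ) ≤ (1 + ε) ^ n := one_le_pow₀ (by linarith)
      have := abs_mul_sub_one' h1 (by linarith : (1:ℝ) ≤ 1 + ε) ih (by simpa using hx)
      calc |x ^ (n+1) - 1| = |x ^ n * x - 1| := by rw [pow_succ]
        _ ≤ (1 + ε) ^ n * (1 + ε) - 1 := this
        _ = (1 + ε) ^ (n+1) - 1 := by rw [pow_succ]

lemma abs_prod_pow_sub_one {ι : Type*} {x : ι → ℝ} {τ : ι → ℕ} {ε : ℝ}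
    (hε : 0 ≤ ε) (hx : ∀ l, |x l - 1| ≤ ε) (t : Finset ι) :
    |∏ l ∈ t, x l ^ τ l - 1| ≤ (1 + ε) ^ (∑ l ∈ t, τ l) - 1 := by
  induction t using Finset.cons_induction with
  | empty => simp
  | cons a t ha ih =>
      rw [Finset.prod_cons, Finset.sum_cons, pow_add]
      exact abs_mul_sub_one' (one_le_pow₀ (by linarith)) (one_le_pow₀ (by linarith))
        (abs_pow_sub_one' hε (hx a) _) ih

lemma exp_sub_one_le' {t : ℝ} (h0 : 0 ≤ t) (h1 : t ≤ 1) :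
    Real.exp t - 1 ≤ Real.exp 1 * t := by
  have h2 := Real.add_one_le_exp (-t)
  rw [Real.exp_neg] at h2
  have h4 : Real.exp t ≤ Real.exp 1 := Real.exp_le_exp.2 h1
  have h5 : (0:ℝ) < Real.exp t := Real.exp_pos t
  have h6 : (1 - t) * Real.exp t ≤ 1 := by
    have := mul_le_mul_of_nonneg_right h2 (le_of_lt h5)
    rw [inv_mul_cancel₀ (ne_of_gt h5)] at this
    linarith
  nlinarith [mul_le_mul_of_nonneg_left h4 h0]

lemma spec_le_frob {m k : ℕ} (A : Matrix (Fin m) (Fin k) ℝ) : specNorm A ≤ frob A := by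
  apply ContinuousLinearMap.opNorm_le_bound _ (frob_nonneg A)
  intro x
  have hx : ‖x‖ = Real.sqrt (∑ j, x j ^ 2) := by
    rw [EuclideanSpace.norm_eq]
    congr 1; apply Finset.sum_congr rfl; intro j _; rw [Real.norm_eq_abs, sq_abs]
  have hAx : ‖(LinearMap.toContinuousLinearMap (Matrix.toEuclideanLin A)) x‖
      = Real.sqrt (∑ i, (∑ j, A i j * x j) ^ 2) := by
    rw [LinearMap.coe_toContinuousLinearMap', EuclideanSpace.norm_eq]
    congr 1; apply Finset.sum_congr rfl; intro i _
    rw [Real.norm_eq_abs, sq_abs]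
    congr 1
  rw [hAx, hx]
  rw [frob, ← Real.sqrt_mul (by positivity)]
  apply Real.sqrt_le_sqrt
  calc ∑ i, (∑ j, A i j * x j) ^ 2
      ≤ ∑ i, (∑ j, A i j ^ 2) * (∑ j, x j ^ 2) := by
        apply Finset.sum_le_sum; intro i _
        exact Finset.sum_mul_sq_le_sq_mul_sq _ _ _
    _ = (∑ i, ∑ j, A i j ^ 2) * ∑ j, x j ^ 2 := by rw [Finset.sum_mul]

lemma frob_le_sqrt_spec {m k : ℕ} (A : Matrix (Fin m) (Fin k) ℝ) :
    frob A ≤ Real.sqrt k * specNorm A := by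
  have hs : 0 ≤ specNorm A := norm_nonneg _
  have hcol : ∀ j : Fin k, ∑ i, A i j ^ 2 ≤ specNorm A ^ 2 := by
    intro j
    have h1 := (LinearMap.toContinuousLinearMap (Matrix.toEuclideanLin A)).le_opNorm
      (EuclideanSpace.single j (1:ℝ))
    rw [EuclideanSpace.norm_single] at h1
    simp only [norm_one, mul_one] at h1
    have h2 : ‖(LinearMap.toContinuousLinearMap (Matrix.toEuclideanLin A))
        (EuclideanSpace.single j (1:ℝ))‖ = Real.sqrt (∑ i, A i j ^ 2) := by
      rw [LinearMap.coe_toContinuousLinearMap', EuclideanSpace.norm_eq]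
      congr 1; apply Finset.sum_congr rfl; intro i _
      rw [Real.norm_eq_abs, sq_abs]
      have he : (WithLp.equiv 2 (Fin k → ℝ)) (EuclideanSpace.single j (1:ℝ))
          = Pi.single j (1:ℝ) := rfl
      have : (Matrix.toEuclideanLin A) (EuclideanSpace.single j (1:ℝ)) i
          = Matrix.mulVec A (Pi.single j (1:ℝ)) i := by rw [← he]; rfl
      rw [this, Matrix.mulVec_single]; simp
    rw [h2] at h1
    calc ∑ i, A i j ^ 2 = Real.sqrt (∑ i, A i j ^ 2) ^ 2 := by
          rw [Real.sq_sqrt (by positivity)]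
      _ ≤ specNorm A ^ 2 := by apply pow_le_pow_left₀ (Real.sqrt_nonneg _) h1
  rw [frob]
  have : ∑ i, ∑ j, A i j ^ 2 ≤ (k : ℝ) * specNorm A ^ 2 := by
    rw [Finset.sum_comm]
    calc ∑ j, ∑ i, A i j ^ 2 ≤ ∑ _j : Fin k, specNorm A ^ 2 :=
          Finset.sum_le_sum fun j _ => hcol j
      _ = (k : ℝ) * specNorm A ^ 2 := by simp [mul_comm]
  calc Real.sqrt (∑ i, ∑ j, A i j ^ 2) ≤ Real.sqrt ((k:ℝ) * specNorm A ^ 2) :=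
        Real.sqrt_le_sqrt this
    _ = Real.sqrt k * specNorm A := by
        rw [Real.sqrt_mul (by positivity), Real.sqrt_sq hs]

lemma frob_sub_le {m k : ℕ} (A B : Matrix (Fin m) (Fin k) ℝ) (c : ℝ) (hc : 0 ≤ c)
    (h : ∀ i j, |A i j - B i j| ≤ c * |B i j|) : frob (A - B) ≤ c * frob B := by
  rw [frob, frob, ← Real.sqrt_sq hc, ← Real.sqrt_mul (by positivity)]
  apply Real.sqrt_le_sqrt
  rw [Finset.mul_sum]
  apply Finset.sum_le_sum; intro i _
  rw [Finset.mul_sum]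
  apply Finset.sum_le_sum; intro j _
  have h1 : (A - B) i j = A i j - B i j := by simp [Matrix.sub_apply]
  rw [h1]
  calc (A i j - B i j) ^ 2 = |A i j - B i j| ^ 2 := (sq_abs _).symm
    _ ≤ (c * |B i j|) ^ 2 := pow_le_pow_left₀ (abs_nonneg _) (h i j) 2
    _ = c ^ 2 * B i j ^ 2 := by rw [mul_pow, sq_abs]

theorem eval_matrix_perturbation_bound {s m k : ℕ}
    (τ : Fin k → Fin s → ℕ) (dM : ℕ) (hdeg : ∀ j, ∑ i, τ j i ≤ dM)
    (P Pbar : Fin m → Fin s → ℝ)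
    (δ : Fin m → Fin s → ℝ) (δR : ℝ) (hδR : 0 ≤ δR)
    (hpert : ∀ i j, Pbar i j = P i j * (1 + δ i j))
    (hbound : ∀ i j, |δ i j| ≤ δR)
    (hdR : (dM : ℝ) * δR ≤ 1) :
    specNorm ((Matrix.of fun i j => monoEval (τ j) (Pbar i)) -
        Matrix.of fun i j => monoEval (τ j) (P i)) ≤
      Real.sqrt k * Real.exp 1 * dM * δR *
        specNorm (Matrix.of fun i j => monoEval (τ j) (P i)) := by
  set c : ℝ := Real.exp 1 * dM * δR with hc
  have hc0 : 0 ≤ c := by positivity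
  set A : Matrix (Fin m) (Fin k) ℝ := Matrix.of fun i j => monoEval (τ j) (Pbar i) with hA
  set B : Matrix (Fin m) (Fin k) ℝ := Matrix.of fun i j => monoEval (τ j) (P i) with hB
  have hentry : ∀ i j, |A i j - B i j| ≤ c * |B i j| := by
    intro i j
    have hfac : A i j = B i j * ∏ l, (1 + δ i l) ^ τ j l := by
      simp only [hA, hB, Matrix.of_apply, monoEval]
      rw [← Finset.prod_mul_distrib]
      apply Finset.prod_congr rfl; intro l _
      rw [hpert i l, mul_pow]
    have hprod : |∏ l, (1 + δ i l) ^ τ j l - 1| ≤ c := by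
      have h1 := abs_prod_pow_sub_one (x := fun l => 1 + δ i l) (τ := τ j) hδR
        (fun l => by
          rw [show (1:ℝ) + δ i l - 1 = δ i l by ring]; exact hbound i l)
        (Finset.univ : Finset (Fin s))
      have h2 : (1 + δR) ^ (∑ l, τ j l) ≤ (1 + δR) ^ dM :=
        pow_le_pow_right₀ (by linarith) (hdeg j)
      have h3 : (1 + δR) ^ dM ≤ Real.exp ((dM : ℝ) * δR) := by
        calc (1 + δR) ^ dM ≤ Real.exp δR ^ dM := by
              apply pow_le_pow_left₀ (by linarith)
              linarith [Real.add_one_le_exp δR]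
          _ = Real.exp ((dM : ℝ) * δR) := by rw [← Real.exp_nat_mul]
      have h4 : Real.exp ((dM : ℝ) * δR) - 1 ≤ Real.exp 1 * ((dM : ℝ) * δR) :=
        exp_sub_one_le' (by positivity) hdR
      calc |∏ l, (1 + δ i l) ^ τ j l - 1| ≤ (1 + δR) ^ (∑ l, τ j l) - 1 := h1
        _ ≤ Real.exp ((dM : ℝ) * δR) - 1 := by linarith
        _ ≤ Real.exp 1 * ((dM : ℝ) * δR) := h4
        _ = c := by rw [hc]; ring
    calc |A i j - B i j| = |B i j * (∏ l, (1 + δ i l) ^ τ j l - 1)| := by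
          rw [hfac]; ring_nf
      _ = |B i j| * |∏ l, (1 + δ i l) ^ τ j l - 1| := by rw [abs_mul]
      _ ≤ |B i j| * c := mul_le_mul_of_nonneg_left hprod (abs_nonneg _)
      _ = c * |B i j| := mul_comm _ _
  calc specNorm (A - B) ≤ frob (A - B) := spec_le_frob _
    _ ≤ c * frob B := frob_sub_le A B c hc0 hentry
    _ ≤ c * (Real.sqrt k * specNorm B) :=
        mul_le_mul_of_nonneg_left (frob_le_sqrt_spec B) hc0
    _ = Real.sqrt k * Real.exp 1 * dM * δR * specNorm B := by rw [hc]; ring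
end
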